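/- Let f be a strictly increasing Allee map on [0,b] with threshold A_f and carrying capacity K_f, and let g be a strictly increasing Allee map on [0,b] with threshold A_g and carrying capacity K_g, where A_f < A_g < K_f < K_g. If x₀ ∈ (A_f, A_g), then, setting p₀ = μ({ω : the sequence n ↦ X n ω converges to 0}) and p₁ = μ({ω : ∃ n₀ ∈ ℕ, ∀ n ≥ n₀, X n ω ∈ [K_f, K_g]}), we have p₀ > 0, p₁ > 0 and p₀ + p₁ = 1. -/

import Mathlib

open MeasureTheory ProbabilityTheory Filter Set

/-- `f` is a strictly increasing Allee map on `[0, b]` with threshold `A` and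
carrying capacity `K`. -/
def IsIncAlleeMap (b A K : ℝ) (f : ℝ → ℝ) : Prop :=
  0 < A ∧ A < K ∧ K < b ∧
  MapsTo f (Icc 0 b) (Icc 0 b) ∧
  ContinuousOn f (Icc 0 b) ∧
  StrictMonoOn f (Icc 0 b) ∧
  f 0 = 0 ∧ f A = A ∧ f K = K ∧
  (∀ x ∈ Ioo 0 A ∪ Ioc K b, f x < x) ∧
  (∀ x ∈ Ioo A K, x < f x)

/-- The random orbit driven by a sequence of coin flips: apply `f` when the coin shows
`true` and `g` when it shows `false`. -/
def randOrbit (f g : ℝ → ℝ) (x₀ : ℝ) : ℕ → (ℕ → Bool) → ℝ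
  | 0, _ => x₀
  | n + 1, ω => if ω n then f (randOrbit f g x₀ n ω) else g (randOrbit f g x₀ n ω)

/-!
Both maps preserve `[0, Kg]`, `[0, Af)` and `(Kf, Kg]`. On `[0, Af)` every random orbit decreases,
and its limit is a fixed point of a map applied infinitely often, hence `0`; `(Kf, Kg]` is a trap.
From every point of the middle band `[Af, Kf]` some finite coin word leads out of the band: below
`Ag` iterate `g` down towards `0`; otherwise iterate `f` up towards `Kf > Ag` and then `g` up
towards `Kg > Kf`. By continuity and compactness one length `L` serves all points, so each block of `L`
coins leaves the band with probability at least `min(p, 1 - p) ^ L`, independently of the past,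
and the orbit stays in the band forever with probability `0`. Both outcomes have positive
probability because a fixed finite word leads from `x₀` to each of the two traps.
-/

open Topology
open scoped ENNReal

theorem apply_eq_of_tendsto_of_frequently {X : Type*} [TopologicalSpace X] [T2Space X]
    {h : X → X} {y : ℕ → X} {ℓ : X} (hy : Tendsto y atTop (𝓝 ℓ)) (hh : ContinuousAt h ℓ)
    (hfr : ∃ᶠ n in atTop, y (n + 1) = h (y n)) : h ℓ = ℓ :=
  tendsto_nhds_unique_of_frequently_eq (hh.tendsto.comp hy)
    (hy.comp (tendsto_add_atTop_nat 1)) (hfr.mono fun _ hn => hn.symm)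

namespace IsIncAlleeMap

variable {b A K : ℝ} {h : ℝ → ℝ} {x : ℝ}

theorem threshold_pos (hh : IsIncAlleeMap b A K h) : 0 < A := hh.1

theorem threshold_lt_carrying (hh : IsIncAlleeMap b A K h) : A < K := hh.2.1

theorem carrying_lt (hh : IsIncAlleeMap b A K h) : K < b := hh.2.2.1

theorem mapsTo (hh : IsIncAlleeMap b A K h) : MapsTo h (Icc 0 b) (Icc 0 b) := hh.2.2.2.1

theorem continuousOn (hh : IsIncAlleeMap b A K h) : ContinuousOn h (Icc 0 b) := hh.2.2.2.2.1

theorem strictMonoOn (hh : IsIncAlleeMap b A K h) : StrictMonoOn h (Icc 0 b) := hh.2.2.2.2.2.1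

theorem le_apply_of_mem_Icc (hh : IsIncAlleeMap b A K h) (hx : x ∈ Icc A K) : x ≤ h x := by
  obtain ⟨-, -, -, -, -, -, -, hA, hK, -, hgt⟩ := hh
  rcases hx.1.eq_or_lt with rfl | hAx
  · exact hA.ge
  rcases hx.2.eq_or_lt with rfl | hxK
  · exact hK.ge
  exact (hgt x ⟨hAx, hxK⟩).le

theorem apply_le_of_mem_Icc_zero (hh : IsIncAlleeMap b A K h) (hx : x ∈ Icc 0 A) : h x ≤ x := by
  obtain ⟨-, -, -, -, -, -, h0, hA, -, hlt, -⟩ := hh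
  rcases hx.1.eq_or_lt with rfl | h0x
  · exact h0.le
  rcases hx.2.eq_or_lt with rfl | hxA
  · exact hA.le
  exact (hlt x (.inl ⟨h0x, hxA⟩)).le

theorem apply_le_of_mem_Icc_carrying (hh : IsIncAlleeMap b A K h) (hx : x ∈ Icc K b) :
    h x ≤ x := by
  obtain ⟨-, -, -, -, -, -, -, -, hK, hlt, -⟩ := hh
  rcases hx.1.eq_or_lt with rfl | hKx
  · exact hK.le
  exact (hlt x (.inr ⟨hKx, hx.2⟩)).le

theorem mapsTo_Ico_zero (hh : IsIncAlleeMap b A K h) {c : ℝ} (hc : c ≤ A) :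
    MapsTo h (Ico 0 c) (Ico 0 c) := fun x hx =>
  have hxA : x ∈ Icc 0 A := ⟨hx.1, hx.2.le.trans hc⟩
  ⟨(hh.mapsTo ⟨hx.1, hxA.2.trans (hh.threshold_lt_carrying.trans hh.carrying_lt).le⟩).1,
    (hh.apply_le_of_mem_Icc_zero hxA).trans_lt hx.2⟩

theorem mapsTo_Icc_zero (hh : IsIncAlleeMap b A K h) {c : ℝ} (hc : c ∈ Icc K b) :
    MapsTo h (Icc 0 c) (Icc 0 c) := fun x hx =>
  have hxb : x ∈ Icc 0 b := ⟨hx.1, hx.2.trans hc.2⟩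
  have hcb : c ∈ Icc 0 b := ⟨hx.1.trans hx.2, hc.2⟩
  ⟨(hh.mapsTo hxb).1,
    (hh.strictMonoOn.monotoneOn hxb hcb hx.2).trans (hh.apply_le_of_mem_Icc_carrying hc)⟩

theorem mapsTo_Ioc (hh : IsIncAlleeMap b A K h) {c' c : ℝ} (hc' : c' ∈ Icc A K)
    (hc : c ∈ Icc K b) : MapsTo h (Ioc c' c) (Ioc c' c) := fun x hx => by
  have hc'b : c' ∈ Icc 0 b := ⟨hh.threshold_pos.le.trans hc'.1, hc'.2.trans hc.1 |>.trans hc.2⟩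
  have hxb : x ∈ Icc 0 b := ⟨hc'b.1.trans hx.1.le, hx.2.trans hc.2⟩
  have hcb : c ∈ Icc 0 b := ⟨hxb.1.trans hx.2, hc.2⟩
  exact ⟨(hh.le_apply_of_mem_Icc hc').trans_lt (hh.strictMonoOn hc'b hxb hx.1),
    (hh.strictMonoOn.monotoneOn hxb hcb hx.2).trans (hh.apply_le_of_mem_Icc_carrying hc)⟩

theorem eq_zero_of_tendsto (hh : IsIncAlleeMap b A K h) {y : ℕ → ℝ} {ℓ : ℝ}
    (hy : Tendsto y atTop (𝓝 ℓ)) (hℓ : ℓ ∈ Ico 0 A) (hfr : ∃ᶠ n in atTop, y (n + 1) = h (y n)) :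
    ℓ = 0 := by
  obtain ⟨-, hAK, hKb, -, hcont, -, -, -, -, hlt, -⟩ := hh
  by_contra hℓ0
  have hpos : 0 < ℓ := lt_of_le_of_ne hℓ.1 (Ne.symm hℓ0)
  have hfix := apply_eq_of_tendsto_of_frequently hy
    (hcont.continuousAt (Icc_mem_nhds hpos (by linarith [hℓ.2]))) hfr
  exact (hlt ℓ (.inl ⟨hpos, hℓ.2⟩)).ne hfix

theorem eq_carrying_of_tendsto (hh : IsIncAlleeMap b A K h) {y : ℕ → ℝ} {ℓ : ℝ}
    (hy : Tendsto y atTop (𝓝 ℓ)) (hℓ : ℓ ∈ Ioc A K) (hfr : ∃ᶠ n in atTop, y (n + 1) = h (y n)) :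
    ℓ = K := by
  obtain ⟨hA, -, hKb, -, hcont, -, -, -, -, -, hgt⟩ := hh
  by_contra hℓK
  have hlt : ℓ < K := lt_of_le_of_ne hℓ.2 hℓK
  have hfix := apply_eq_of_tendsto_of_frequently hy
    (hcont.continuousAt (Icc_mem_nhds (by linarith [hℓ.1]) (by linarith))) hfr
  exact (hgt ℓ ⟨hℓ.1, hlt⟩).ne' hfix

theorem iterate_mem_Ioc (hh : IsIncAlleeMap b A K h) (hx : x ∈ Ioc A K) (n : ℕ) :
    h^[n] x ∈ Ioc A K :=
  (hh.mapsTo_Ioc ⟨le_rfl, hh.threshold_lt_carrying.le⟩ ⟨le_rfl, hh.carrying_lt.le⟩).iterate n hx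

theorem tendsto_iterate_carrying (hh : IsIncAlleeMap b A K h) (hx : x ∈ Ioc A K) :
    Tendsto (fun n => h^[n] x) atTop (𝓝 K) := by
  have hmem := hh.iterate_mem_Ioc hx
  have hmono : Monotone (fun n => h^[n] x) := monotone_nat_of_le_succ fun n => by
    rw [Function.iterate_succ_apply']
    exact hh.le_apply_of_mem_Icc ⟨(hmem n).1.le, (hmem n).2⟩
  have hbdd : BddAbove (range fun n => h^[n] x) := ⟨K, by rintro _ ⟨n, rfl⟩; exact (hmem n).2⟩
  have hlim := tendsto_atTop_ciSup hmono hbdd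
  have hℓ : (⨆ n, h^[n] x) ∈ Ioc A K :=
    ⟨hx.1.trans_le (le_ciSup hbdd 0), ciSup_le fun n => (hmem n).2⟩
  rwa [← hh.eq_carrying_of_tendsto hlim hℓ
    (.of_forall fun n => Function.iterate_succ_apply' h n x)]

end IsIncAlleeMap

section RandOrbit

variable {f g : ℝ → ℝ} {x : ℝ} {n : ℕ} {ω : ℕ → Bool}

theorem randOrbit_congr {ω' : ℕ → Bool} (hω : ∀ i < n, ω i = ω' i) :
    randOrbit f g x n ω = randOrbit f g x n ω' := by
  induction n with
  | zero => rfl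
  | succ n ih =>
    simp only [randOrbit, hω n n.lt_succ_self, ih fun i hi => hω i (hi.trans n.lt_succ_self)]

theorem randOrbit_add (m : ℕ) :
    randOrbit f g x (n + m) ω = randOrbit f g (randOrbit f g x n ω) m (fun i => ω (n + i)) := by
  induction m with
  | zero => rfl
  | succ m ih =>
    show randOrbit f g x (n + m + 1) ω = _
    simp only [randOrbit, ih]

theorem randOrbit_eq_iterate {c : Bool} (hω : ∀ i < n, ω i = c) :
    randOrbit f g x n ω = (bif c then f else g)^[n] x := by
  induction n with
  | zero => rfl
  | succ n ih =>
    rw [Function.iterate_succ_apply', ← ih fun i hi => hω i (hi.trans n.lt_succ_self)]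
    cases c <;> simp [randOrbit, hω n n.lt_succ_self]

theorem exists_randOrbit_eq_iterate_iterate (n₁ n₂ : ℕ) :
    ∃ ω, randOrbit f g x (n₁ + n₂) ω = g^[n₂] (f^[n₁] x) := by
  refine ⟨fun i => decide (i < n₁), ?_⟩
  rw [randOrbit_add, randOrbit_eq_iterate (n := n₁) (c := true) fun i hi => by simpa using hi,
    randOrbit_eq_iterate (c := false) fun i _ => by simp]
  simp

theorem randOrbit_mem {s : Set ℝ} (hf : MapsTo f s s) (hg : MapsTo g s s) (hx : x ∈ s) :
    randOrbit f g x n ω ∈ s := by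
  induction n with
  | zero => exact hx
  | succ n ih =>
    simp only [randOrbit]
    split
    exacts [hf ih, hg ih]

theorem randOrbit_mem_of_le {s : Set ℝ} (hf : MapsTo f s s) (hg : MapsTo g s s)
    (hn : randOrbit f g x n ω ∈ s) {k : ℕ} (hnk : n ≤ k) : randOrbit f g x k ω ∈ s := by
  obtain ⟨m, rfl⟩ := Nat.exists_eq_add_of_le hnk
  rw [randOrbit_add]
  exact randOrbit_mem hf hg hn

theorem continuousOn_randOrbit {s : Set ℝ} (hfc : ContinuousOn f s) (hgc : ContinuousOn g s)
    (hf : MapsTo f s s) (hg : MapsTo g s s) : ContinuousOn (fun x => randOrbit f g x n ω) s := by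
  induction n with
  | zero => exact continuousOn_id
  | succ n ih =>
    simp only [randOrbit]
    split
    exacts [hfc.comp ih fun _ hx => randOrbit_mem hf hg hx,
      hgc.comp ih fun _ hx => randOrbit_mem hf hg hx]

/-- Each escape word still leads into `U` from a neighbourhood of its starting point; take the
longest of finitely many such words, `C` being absorbing. -/
theorem exists_uniform_randOrbit_length {S C U : Set ℝ} (hS : IsCompact S) (hfc : ContinuousOn f S)
    (hgc : ContinuousOn g S) (hfS : MapsTo f S S) (hgS : MapsTo g S S) (hfC : MapsTo f C C)
    (hgC : MapsTo g C C) (hU : IsOpen U) (hSU : S ∩ U ⊆ C)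
    (hreach : ∀ x ∈ S, ∃ n ω, randOrbit f g x n ω ∈ U) :
    ∃ L, ∀ x ∈ S, ∃ ω, randOrbit f g x L ω ∈ C := by
  choose! n ω hnω using hreach
  have hnhds : ∀ x ∈ S, {y | randOrbit f g y (n x) (ω x) ∈ U} ∈ 𝓝[S] x := fun x hx =>
    (continuousOn_randOrbit hfc hgc hfS hgS x hx).preimage_mem_nhdsWithin
      (hU.mem_nhds (hnω x hx))
  obtain ⟨t, -, hcover⟩ := hS.elim_nhdsWithin_subcover _ hnhds
  refine ⟨t.sup n, fun y hy => ?_⟩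
  obtain ⟨x, hxt, hyx⟩ := mem_iUnion₂.mp (hcover hy)
  exact ⟨ω x, randOrbit_mem_of_le hfC hgC (hSU ⟨randOrbit_mem hfS hgS hy, hyx⟩)
    (Finset.le_sup hxt)⟩

/-- `f` and `g` need not be measurable: `randOrbit f g x n` factors through the first `n` coins,
a countable space. -/
theorem measurable_randOrbit : Measurable (randOrbit f g x n) := by
  let extend : (Fin n → Bool) → ℕ → Bool := fun v i => if h : i < n then v ⟨i, h⟩ else false
  have hfactor : randOrbit f g x n = (fun v => randOrbit f g x n (extend v)) ∘
      fun ω (i : Fin n) => ω i :=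
    funext fun ω => randOrbit_congr fun i hi => by simp [extend, hi]
  rw [hfactor]
  exact (measurable_of_countable _).comp (measurable_pi_lambda _ fun i => measurable_pi_apply _)

end RandOrbit

theorem tendsto_randOrbit_zero {b Af Kf Ag Kg c : ℝ} {f g : ℝ → ℝ}
    (hf : IsIncAlleeMap b Af Kf f) (hg : IsIncAlleeMap b Ag Kg g) (hcf : c ≤ Af) (hcg : c ≤ Ag)
    {x : ℝ} (hx : x ∈ Ico 0 c) (ω : ℕ → Bool) :
    Tendsto (fun n => randOrbit f g x n ω) atTop (𝓝 0) := by
  set y := fun n => randOrbit f g x n ω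
  have hmem : ∀ n, y n ∈ Ico 0 c := fun n =>
    randOrbit_mem (hf.mapsTo_Ico_zero hcf) (hg.mapsTo_Ico_zero hcg) hx
  have hstep : ∀ n, y (n + 1) = if ω n then f (y n) else g (y n) := fun n => rfl
  have hanti : Antitone y := antitone_nat_of_succ_le fun n => by
    rw [hstep]
    split
    · exact hf.apply_le_of_mem_Icc_zero ⟨(hmem n).1, (hmem n).2.le.trans hcf⟩
    · exact hg.apply_le_of_mem_Icc_zero ⟨(hmem n).1, (hmem n).2.le.trans hcg⟩
  have hbdd : BddBelow (range y) := ⟨0, by rintro _ ⟨n, rfl⟩; exact (hmem n).1⟩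
  have hlim := tendsto_atTop_ciInf hanti hbdd
  have hℓ : (⨅ n, y n) ∈ Ico 0 c :=
    ⟨le_ciInf fun n => (hmem n).1, (ciInf_le hbdd 0).trans_lt hx.2⟩
  -- the limit is a fixed point of whichever map is applied infinitely often
  have hfr : (∃ᶠ n in atTop, ω n = true) ∨ ∃ᶠ n in atTop, ω n = false :=
    frequently_or_distrib.mp (.of_forall fun n => (ω n).eq_false_or_eq_true)
  convert hlim
  rcases hfr with hfr | hfr
  · exact (hf.eq_zero_of_tendsto hlim ⟨hℓ.1, hℓ.2.trans_le hcf⟩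
      (hfr.mono fun n hn => by simp [hstep, hn])).symm
  · exact (hg.eq_zero_of_tendsto hlim ⟨hℓ.1, hℓ.2.trans_le hcg⟩
      (hfr.mono fun n hn => by simp [hstep, hn])).symm

theorem IsIncAlleeMap.tendsto_iterate_zero {b A K : ℝ} {h : ℝ → ℝ} (hh : IsIncAlleeMap b A K h)
    {x : ℝ} (hx : x ∈ Ico 0 A) : Tendsto (fun n => h^[n] x) atTop (𝓝 0) := by
  have := tendsto_randOrbit_zero hh hh le_rfl le_rfl hx fun _ => true
  simpa only [randOrbit_eq_iterate (c := true) fun _ _ => rfl, cond_true] using this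

theorem tendsto_randOrbit_zero_of_mem {b Af Kf Ag Kg c : ℝ} {f g : ℝ → ℝ}
    (hf : IsIncAlleeMap b Af Kf f) (hg : IsIncAlleeMap b Ag Kg g) (hcf : c ≤ Af) (hcg : c ≤ Ag)
    {x : ℝ} {n : ℕ} {ω : ℕ → Bool} (hn : randOrbit f g x n ω ∈ Ico 0 c) :
    Tendsto (fun k => randOrbit f g x k ω) atTop (𝓝 0) := by
  refine (tendsto_add_atTop_iff_nat n).1 ?_
  simp_rw [add_comm _ n, randOrbit_add]
  exact tendsto_randOrbit_zero hf hg hcf hcg hn _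

section Independence

variable {Ω β : Type*} [MeasurableSpace Ω] [MeasurableSpace β] {μ : Measure Ω}

theorem ProbabilityTheory.IndepFun.measure_mem_and_notMem_le {α : Type*} [MeasurableSpace α]
    [MeasurableSingletonClass α] [IsProbabilityMeasure μ] {R₁ : Ω → α} {R₂ : Ω → β}
    (hR : IndepFun R₁ R₂ μ) (hR₁ : Measurable R₁) (hR₂ : Measurable R₂) (V : Finset α)
    {S : α → Set β} (hS : ∀ a, MeasurableSet (S a)) {c : ℝ≥0∞}
    (hc : ∀ a ∈ V, c ≤ μ (R₂ ⁻¹' S a)) :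
    μ {ω | R₁ ω ∈ V ∧ R₂ ω ∉ S (R₁ ω)} ≤ (1 - c) * μ (R₁ ⁻¹' V) := by
  have hsub : {ω | R₁ ω ∈ V ∧ R₂ ω ∉ S (R₁ ω)} ⊆ ⋃ a ∈ V, R₁ ⁻¹' {a} ∩ R₂ ⁻¹' (S a)ᶜ :=
    fun ω hω => mem_biUnion hω.1 ⟨rfl, hω.2⟩
  calc _ ≤ ∑ a ∈ V, μ (R₁ ⁻¹' {a} ∩ R₂ ⁻¹' (S a)ᶜ) :=
        (measure_mono hsub).trans (measure_biUnion_finset_le _ _)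
    _ = ∑ a ∈ V, μ (R₁ ⁻¹' {a}) * μ (R₂ ⁻¹' S a)ᶜ := Finset.sum_congr rfl fun a _ =>
        hR.measure_inter_preimage_eq_mul _ _ (measurableSet_singleton a) (hS a).compl
    _ ≤ ∑ a ∈ V, μ (R₁ ⁻¹' {a}) * (1 - c) := by
        gcongr with a ha
        rw [prob_compl_eq_one_sub (hR₂ (hS a))]
        exact tsub_le_tsub_left (hc a ha) 1
    _ = (1 - c) * μ (R₁ ⁻¹' V) := by
        rw [← Finset.sum_mul, mul_comm,
          sum_measure_preimage_singleton V fun a _ => hR₁ (measurableSet_singleton a)]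

theorem ProbabilityTheory.iIndepFun.indepFun_fin_block {X : ℕ → Ω → β} (h : iIndepFun X μ)
    (hX : ∀ i, Measurable (X i)) (m L : ℕ) :
    IndepFun (fun ω (i : Fin m) => X i ω) (fun ω (i : Fin L) => X (m + i) ω) μ := by
  have hdisj : Disjoint (Finset.range m) (Finset.Ico m (m + L)) :=
    Finset.disjoint_left.2 fun i h₁ h₂ => by
      simp only [Finset.mem_range, Finset.mem_Ico] at h₁ h₂
      omega
  exact (h.indepFun_finset _ _ hdisj hX).comp
    (φ := fun u (i : Fin m) => u ⟨i, by simp⟩) (ψ := fun u (i : Fin L) => u ⟨m + i, by simp⟩)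
    (measurable_pi_lambda _ fun _ => measurable_pi_apply _)
    (measurable_pi_lambda _ fun _ => measurable_pi_apply _)

theorem ProbabilityTheory.iIndepFun.pow_card_le_measure {κ ι : Type*} [Fintype ι]
    [MeasurableSingletonClass β] {X : κ → Ω → β} (h : iIndepFun X μ) {ρ : ℝ≥0∞}
    (hρ : ∀ k b, ρ ≤ μ {ω | X k ω = b}) {e : ι → κ} (he : Function.Injective e) (w : ι → β) :
    ρ ^ Fintype.card ι ≤ μ {ω | ∀ i, X (e i) ω = w i} := by
  have hset : {ω | ∀ i, X (e i) ω = w i} = ⋂ i ∈ Finset.univ, X (e i) ⁻¹' {w i} := by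
    ext
    simp
  rw [hset, (h.precomp he).measure_inter_preimage_eq_mul _ fun i _ => measurableSet_singleton _,
    ← Finset.card_univ, ← Finset.prod_const]
  exact Finset.prod_le_prod' fun i _ => hρ (e i) (w i)

end Independence

section Coins

variable {f g : ℝ → ℝ} {x₀ : ℝ} {μ : Measure (ℕ → Bool)} {ρ : ℝ≥0∞}

theorem measure_exists_randOrbit_mem_pos (hindep : iIndepFun (fun n (ω : ℕ → Bool) => ω n) μ)
    (hρ0 : ρ ≠ 0) (hρ : ∀ n c, ρ ≤ μ {ω | ω n = c}) {s : Set ℝ}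
    (h : ∃ n ω, randOrbit f g x₀ n ω ∈ s) : 0 < μ {ω | ∃ n, randOrbit f g x₀ n ω ∈ s} := by
  obtain ⟨n, w, hw⟩ := h
  have hsub : {ω | ∀ i : Fin n, ω i = w i} ⊆ {ω | ∃ n, randOrbit f g x₀ n ω ∈ s} :=
    fun ω hω => ⟨n, by rwa [randOrbit_congr fun i hi => hω ⟨i, hi⟩]⟩
  calc 0 < ρ ^ Fintype.card (Fin n) := pos_iff_ne_zero.2 (pow_ne_zero _ hρ0)
    _ ≤ _ := hindep.pow_card_le_measure hρ Fin.val_injective _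
    _ ≤ _ := measure_mono hsub

variable [IsProbabilityMeasure μ] {S C : Set ℝ} {L : ℕ}

theorem exists_ne_zero_le_measure_coin {p : ℝ} (hp : p ∈ Ioo 0 1)
    (hcoin : ∀ n, μ {ω | ω n = true} = ENNReal.ofReal p) :
    ∃ ρ ≠ 0, ∀ n c, ρ ≤ μ {ω | ω n = c} := by
  refine ⟨ENNReal.ofReal (min p (1 - p)), by simp [hp.1, hp.2], fun n c => ?_⟩
  cases c
  · have hcompl : {ω : ℕ → Bool | ω n = false} = {ω | ω n = true}ᶜ := by ext; simp
    have hmeas : MeasurableSet {ω : ℕ → Bool | ω n = true} :=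
      (measurableSet_singleton true).preimage (measurable_pi_apply n)
    rw [hcompl, prob_compl_eq_one_sub hmeas, hcoin, ← ENNReal.ofReal_one,
      ← ENNReal.ofReal_sub _ hp.1.le]
    exact ENNReal.ofReal_le_ofReal (min_le_right _ _)
  · rw [hcoin]
    exact ENNReal.ofReal_le_ofReal (min_le_left _ _)

/-- Whatever the first `m` coins, the next `L` ones spell the escape word of the current point
with probability at least `ρ ^ L`. -/
theorem measure_randOrbit_add_notMem_le (hindep : iIndepFun (fun n (ω : ℕ → Bool) => ω n) μ)
    (hρ : ∀ n c, ρ ≤ μ {ω | ω n = c}) (hfS : MapsTo f S S) (hgS : MapsTo g S S)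
    (hfC : MapsTo f C C) (hgC : MapsTo g C C) (hx₀ : x₀ ∈ S)
    (hL : ∀ x ∈ S, ∃ ω, randOrbit f g x L ω ∈ C) (m : ℕ) :
    μ {ω | randOrbit f g x₀ (m + L) ω ∉ C} ≤
      (1 - ρ ^ L) * μ {ω | randOrbit f g x₀ m ω ∉ C} := by
  classical
  let R₁ : (ℕ → Bool) → Fin m → Bool := fun ω i => ω i
  let R₂ : (ℕ → Bool) → Fin L → Bool := fun ω i => ω (m + i)
  let F : (Fin m → Bool) → ℝ := fun v =>
    randOrbit f g x₀ m fun i => if h : i < m then v ⟨i, h⟩ else false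
  have hF : ∀ ω, randOrbit f g x₀ m ω = F (R₁ ω) :=
    fun ω => randOrbit_congr fun i hi => by simp [R₁, hi]
  choose W hW using fun v => hL (F v) (randOrbit_mem hfS hgS hx₀)
  let V := Finset.univ.filter fun v => F v ∉ C
  have hsub : {ω | randOrbit f g x₀ (m + L) ω ∉ C} ⊆
      {ω | R₁ ω ∈ V ∧ R₂ ω ∉ ({fun i : Fin L => W (R₁ ω) i} : Set (Fin L → Bool))} := by
    intro ω hω
    rw [mem_ofPred_eq, randOrbit_add, hF] at hω
    refine ⟨by simpa [V] using fun hC => hω (randOrbit_mem hfC hgC hC), fun hR₂ => hω ?_⟩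
    rw [randOrbit_congr fun i hi => congrFun hR₂ ⟨i, hi⟩]
    exact hW _
  have hblock : ∀ v, ρ ^ L ≤ μ (R₂ ⁻¹' {fun i : Fin L => W v i}) := fun v => by
    convert hindep.pow_card_le_measure hρ (e := fun i : Fin L => m + i)
      ((add_right_injective m).comp Fin.val_injective) fun i => W v i using 2
    · simp
    · ext ω
      simp [R₂, funext_iff]
  have hpre : R₁ ⁻¹' V = {ω | randOrbit f g x₀ m ω ∉ C} := by ext; simp [V, hF]
  calc _ ≤ _ := measure_mono hsub
    _ ≤ (1 - ρ ^ L) * μ (R₁ ⁻¹' V) :=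
        (hindep.indepFun_fin_block (fun i => measurable_pi_apply i) m L
          ).measure_mem_and_notMem_le (measurable_pi_lambda _ fun _ => measurable_pi_apply _)
          (measurable_pi_lambda _ fun _ => measurable_pi_apply _) V
          (fun _ => measurableSet_singleton _) fun v _ => hblock v
    _ = _ := by rw [hpre]

theorem ae_exists_randOrbit_mem (hindep : iIndepFun (fun n (ω : ℕ → Bool) => ω n) μ)
    (hρ0 : ρ ≠ 0) (hρ : ∀ n c, ρ ≤ μ {ω | ω n = c}) (hfS : MapsTo f S S) (hgS : MapsTo g S S)
    (hfC : MapsTo f C C) (hgC : MapsTo g C C) (hx₀ : x₀ ∈ S)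
    (hL : ∀ x ∈ S, ∃ ω, randOrbit f g x L ω ∈ C) :
    ∀ᵐ ω ∂μ, ∃ n, randOrbit f g x₀ n ω ∈ C := by
  have hbound : ∀ k, μ {ω | randOrbit f g x₀ (k * L) ω ∉ C} ≤ (1 - ρ ^ L) ^ k := by
    intro k
    induction k with
    | zero => simpa using prob_le_one
    | succ k ih =>
      calc _ = μ {ω | randOrbit f g x₀ (k * L + L) ω ∉ C} := by rw [Nat.succ_mul]
        _ ≤ (1 - ρ ^ L) * μ {ω | randOrbit f g x₀ (k * L) ω ∉ C} :=
          measure_randOrbit_add_notMem_le hindep hρ hfS hgS hfC hgC hx₀ hL _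
        _ ≤ (1 - ρ ^ L) ^ (k + 1) := by rw [pow_succ']; gcongr
  have hlt : 1 - ρ ^ L < 1 :=
    ENNReal.sub_lt_self ENNReal.one_ne_top one_ne_zero (pow_ne_zero _ hρ0)
  rw [ae_iff]
  refine le_antisymm (ge_of_tendsto (ENNReal.tendsto_pow_atTop_nhds_zero_of_lt_one hlt)
    (.of_forall fun k => (measure_mono fun ω hω => ?_).trans (hbound k))) bot_le
  exact fun hC => hω ⟨_, hC⟩

end Coins

theorem disjoint_tendsto_zero_eventually_mem_Icc {α : Type*} (u : α → ℕ → ℝ) {a c : ℝ}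
    (ha : 0 < a) :
    Disjoint {ω | Tendsto (u ω) atTop (𝓝 0)} {ω | ∃ n₀, ∀ n ≥ n₀, u ω n ∈ Icc a c} := by
  refine disjoint_left.2 fun ω h₀ ⟨n₀, hn₀⟩ => ?_
  obtain ⟨n, hn, hn₀n⟩ :=
    ((h₀.eventually (eventually_lt_nhds ha)).and (eventually_ge_atTop n₀)).exists
  exact (hn₀ n hn₀n).1.not_gt hn

section TwoMaps

variable {b Af Kf Ag Kg : ℝ} {f g : ℝ → ℝ} {x : ℝ}

theorem mapsTo_Ioc_carrying (hf : IsIncAlleeMap b Af Kf f) (hg : IsIncAlleeMap b Ag Kg g)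
    (hAgKf : Ag < Kf) (hKfKg : Kf < Kg) :
    MapsTo f (Ioc Kf Kg) (Ioc Kf Kg) ∧ MapsTo g (Ioc Kf Kg) (Ioc Kf Kg) :=
  ⟨hf.mapsTo_Ioc ⟨hf.threshold_lt_carrying.le, le_rfl⟩ ⟨hKfKg.le, hg.carrying_lt.le⟩,
    hg.mapsTo_Ioc ⟨hAgKf.le, hKfKg.le⟩ ⟨le_rfl, hg.carrying_lt.le⟩⟩

theorem exists_randOrbit_mem_Ico_zero (hf : IsIncAlleeMap b Af Kf f)
    (hg : IsIncAlleeMap b Ag Kg g) (hx : x ∈ Ico 0 Ag) :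
    ∃ n ω, randOrbit f g x n ω ∈ Ico 0 Af := by
  obtain ⟨n, hn⟩ :=
    ((hg.tendsto_iterate_zero hx).eventually (eventually_lt_nhds hf.threshold_pos)).exists
  refine ⟨n, fun _ => false, ?_⟩
  rw [randOrbit_eq_iterate (c := false) fun _ _ => rfl, cond_false]
  exact ⟨((hg.mapsTo_Ico_zero le_rfl).iterate n hx).1, hn⟩

theorem exists_randOrbit_mem_Ioc (hf : IsIncAlleeMap b Af Kf f) (hg : IsIncAlleeMap b Ag Kg g)
    (hAgKf : Ag < Kf) (hKfKg : Kf < Kg) (hx : x ∈ Ioc Af Kf) :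
    ∃ n ω, randOrbit f g x n ω ∈ Ioc Kf Kg := by
  obtain ⟨n₁, hn₁⟩ :=
    ((hf.tendsto_iterate_carrying hx).eventually (eventually_gt_nhds hAgKf)).exists
  have hy : f^[n₁] x ∈ Ioc Ag Kg := ⟨hn₁, (hf.iterate_mem_Ioc hx n₁).2.trans hKfKg.le⟩
  obtain ⟨n₂, hn₂⟩ :=
    ((hg.tendsto_iterate_carrying hy).eventually (eventually_gt_nhds hKfKg)).exists
  obtain ⟨ω, hω⟩ := exists_randOrbit_eq_iterate_iterate (f := f) (g := g) (x := x) n₁ n₂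
  exact ⟨n₁ + n₂, ω, hω ▸ ⟨hn₂, (hg.iterate_mem_Ioc hy n₂).2⟩⟩

theorem exists_randOrbit_mem_Iio_union_Ioi (hf : IsIncAlleeMap b Af Kf f)
    (hg : IsIncAlleeMap b Ag Kg g) (hAfAg : Af < Ag) (hAgKf : Ag < Kf) (hKfKg : Kf < Kg)
    (hx : x ∈ Icc 0 Kg) : ∃ n ω, randOrbit f g x n ω ∈ Iio Af ∪ Ioi Kf := by
  rcases lt_or_ge x Ag with hxAg | hAgx
  · obtain ⟨n, ω, h⟩ := exists_randOrbit_mem_Ico_zero hf hg ⟨hx.1, hxAg⟩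
    exact ⟨n, ω, .inl h.2⟩
  rcases le_or_gt x Kf with hxKf | hKfx
  · obtain ⟨n, ω, h⟩ :=
      exists_randOrbit_mem_Ioc hf hg hAgKf hKfKg ⟨hAfAg.trans_le hAgx, hxKf⟩
    exact ⟨n, ω, .inr h.1⟩
  · exact ⟨0, fun _ => true, .inr hKfx⟩

theorem ae_exists_randOrbit_mem_Ico_union_Ioc {μ : Measure (ℕ → Bool)} [IsProbabilityMeasure μ]
    (hindep : iIndepFun (fun n (ω : ℕ → Bool) => ω n) μ) {ρ : ℝ≥0∞} (hρ0 : ρ ≠ 0)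
    (hρ : ∀ n c, ρ ≤ μ {ω | ω n = c}) (hf : IsIncAlleeMap b Af Kf f)
    (hg : IsIncAlleeMap b Ag Kg g) (hAfAg : Af < Ag) (hAgKf : Ag < Kf) (hKfKg : Kf < Kg)
    (hx : x ∈ Icc 0 Kg) : ∀ᵐ ω ∂μ, ∃ n, randOrbit f g x n ω ∈ Ico 0 Af ∪ Ioc Kf Kg := by
  have hKgb := hg.carrying_lt.le
  have hfS := hf.mapsTo_Icc_zero ⟨hKfKg.le, hKgb⟩
  have hgS := hg.mapsTo_Icc_zero ⟨le_rfl, hKgb⟩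
  obtain ⟨hfK, hgK⟩ := mapsTo_Ioc_carrying hf hg hAgKf hKfKg
  have hfT := (hf.mapsTo_Ico_zero le_rfl).union_union hfK
  have hgT := (hg.mapsTo_Ico_zero hAfAg.le).union_union hgK
  have hSU : Icc 0 Kg ∩ (Iio Af ∪ Ioi Kf) ⊆ Ico 0 Af ∪ Ioc Kf Kg := by
    rintro y ⟨hy, hy' | hy'⟩
    exacts [.inl ⟨hy.1, hy'⟩, .inr ⟨hy', hy.2⟩]
  obtain ⟨L, hL⟩ := exists_uniform_randOrbit_length isCompact_Icc
    (hf.continuousOn.mono (Icc_subset_Icc_right hKgb))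
    (hg.continuousOn.mono (Icc_subset_Icc_right hKgb)) hfS hgS hfT hgT
    (isOpen_Iio.union isOpen_Ioi) hSU
    fun y hy => exists_randOrbit_mem_Iio_union_Ioi hf hg hAfAg hAgKf hKfKg hy
  exact ae_exists_randOrbit_mem hindep hρ0 hρ hfS hgS hfT hgT hx hL

end TwoMaps

theorem stmt4_general
    (b Af Kf Ag Kg : ℝ)
    (f g : ℝ → ℝ)
    (hf : IsIncAlleeMap b Af Kf f) (hg : IsIncAlleeMap b Ag Kg g)
    (horder : Af < Ag ∧ Ag < Kf ∧ Kf < Kg)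
    (p : ℝ) (hp : p ∈ Ioo (0 : ℝ) 1)
    (μ : Measure (ℕ → Bool)) [IsProbabilityMeasure μ]
    (hindep : iIndepFun (fun n (ω : ℕ → Bool) => ω n) μ)
    (hcoin : ∀ n, μ {ω | ω n = true} = ENNReal.ofReal p)
    (x₀ : ℝ) (hx₀ : x₀ ∈ Ioo Af Ag) :
    0 < μ {ω | Tendsto (fun n => randOrbit f g x₀ n ω) atTop (nhds 0)} ∧
    0 < μ {ω | ∃ n₀ : ℕ, ∀ n ≥ n₀, randOrbit f g x₀ n ω ∈ Icc Kf Kg} ∧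
    μ {ω | Tendsto (fun n => randOrbit f g x₀ n ω) atTop (nhds 0)} +
      μ {ω | ∃ n₀ : ℕ, ∀ n ≥ n₀, randOrbit f g x₀ n ω ∈ Icc Kf Kg} = 1 := by
  obtain ⟨hAfAg, hAgKf, hKfKg⟩ := horder
  obtain ⟨ρ, hρ0, hρ⟩ := exists_ne_zero_le_measure_coin hp hcoin
  set E₀ := {ω | Tendsto (fun n => randOrbit f g x₀ n ω) atTop (nhds 0)}
  set E₁ := {ω | ∃ n₀ : ℕ, ∀ n ≥ n₀, randOrbit f g x₀ n ω ∈ Icc Kf Kg}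
  have hx₀0 : 0 ≤ x₀ := hf.threshold_pos.le.trans hx₀.1.le
  have hlow : {ω | ∃ n, randOrbit f g x₀ n ω ∈ Ico 0 Af} ⊆ E₀ := fun _ ⟨_, hn⟩ =>
    tendsto_randOrbit_zero_of_mem hf hg le_rfl hAfAg.le hn
  have hhigh : {ω | ∃ n, randOrbit f g x₀ n ω ∈ Ioc Kf Kg} ⊆ E₁ := fun _ ⟨n, hn⟩ =>
    have hK := mapsTo_Ioc_carrying hf hg hAgKf hKfKg
    ⟨n, fun _ hk => Ioc_subset_Icc_self (randOrbit_mem_of_le hK.1 hK.2 hn hk)⟩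
  have hdisj : Disjoint E₀ E₁ := disjoint_tendsto_zero_eventually_mem_Icc _
    (hf.threshold_pos.trans hf.threshold_lt_carrying)
  have hae : ∀ᵐ ω ∂μ, ω ∈ E₀ ∪ E₁ :=
    (ae_exists_randOrbit_mem_Ico_union_Ioc hindep hρ0 hρ hf hg hAfAg hAgKf hKfKg
      ⟨hx₀0, (hx₀.2.trans hAgKf).le.trans hKfKg.le⟩).mono fun ω ⟨n, hn⟩ =>
      hn.elim (fun h => .inl (hlow ⟨n, h⟩)) fun h => .inr (hhigh ⟨n, h⟩)
  refine ⟨(measure_exists_randOrbit_mem_pos hindep hρ0 hρ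
      (exists_randOrbit_mem_Ico_zero hf hg ⟨hx₀0, hx₀.2⟩)).trans_le (measure_mono hlow),
    (measure_exists_randOrbit_mem_pos hindep hρ0 hρ (exists_randOrbit_mem_Ioc hf hg hAgKf hKfKg
      ⟨hx₀.1, hx₀.2.le.trans hAgKf.le⟩)).trans_le (measure_mono hhigh), ?_⟩
  rw [← measure_union' hdisj (measurableSet_tendsto _ fun n => measurable_randOrbit)]
  exact (measure_congr (ae_eq_univ.2 (ae_iff.1 hae))).trans measure_univ

theorem stmt4
    (b Af Kf Ag Kg : ℝ) (hb : 0 < b)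
    (f g : ℝ → ℝ)
    (hf : IsIncAlleeMap b Af Kf f) (hg : IsIncAlleeMap b Ag Kg g)
    (horder : Af < Ag ∧ Ag < Kf ∧ Kf < Kg)
    (p : ℝ) (hp : p ∈ Ioo (0 : ℝ) 1)
    (μ : Measure (ℕ → Bool)) [IsProbabilityMeasure μ]
    (hindep : iIndepFun (fun n (ω : ℕ → Bool) => ω n) μ)
    (hcoin : ∀ n, μ {ω | ω n = true} = ENNReal.ofReal p)
    (x₀ : ℝ) (hx₀ : x₀ ∈ Ioo Af Ag) :
    0 < μ {ω | Tendsto (fun n => randOrbit f g x₀ n ω) atTop (nhds 0)} ∧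
    0 < μ {ω | ∃ n₀ : ℕ, ∀ n ≥ n₀, randOrbit f g x₀ n ω ∈ Icc Kf Kg} ∧
    μ {ω | Tendsto (fun n => randOrbit f g x₀ n ω) atTop (nhds 0)} +
      μ {ω | ∃ n₀ : ℕ, ∀ n ≥ n₀, randOrbit f g x₀ n ω ∈ Icc Kf Kg} = 1 :=
  stmt4_general b Af Kf Ag Kg f g hf hg horder p hp μ hindep hcoin x₀ hx₀
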